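/- arXiv:1210.2449 — 4 statements merged into one kernel-verified Lean document; each statement's English description precedes it below -/
import Mathlib

section
/- Let T = (S, ι, τ_c, τ_u, F) be a transition system with failures, let G ⊆ S \ F and k ≥ 1, and let A_0, ..., A_{k-1} and L_0, ..., L_k be defined by the construction of safe_k. Then both families form descending chains: A_{i+1} ⊆ A_i for all 0 ≤ i < k-1, and L_{i+1} ⊆ L_i for all 0 ≤ i < k. -/
/-- A transition system with failures `T = (S, ι, τ_c, τ_u, F)`:
`S` is a (finite) set of states, `init` (ι) an initial state, `F` the error (sink) states,
`tc` (τ_c) the controlled transitions `⊆ (S \ F) × (S \ F)`, and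
`tu` (τ_u) the uncontrolled transitions `⊆ (S \ F) × S`;
every non-error state has at least one controlled successor. -/
structure TSF (S : Type*) where
  init : S
  F : Set S
  tc : S → S → Prop
  tu : S → S → Prop
  tc_dom : ∀ ⦃s t : S⦄, tc s t → s ∉ F ∧ t ∉ F
  tu_dom : ∀ ⦃s t : S⦄, tu s t → s ∉ F
  succ_c : ∀ s ∉ F, ∃ t, tc s t

namespace TSF

variable {S : Type*} (T : TSF S)

/-- `suc_c(s)`: controlled successors of `s`. -/
def sucC (s : S) : Set S := {t | T.tc s t}

/-- `suc_u(s)`: uncontrolled successors of `s`. -/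
def sucU (s : S) : Set S := {t | T.tu s t}

/-- `safe_0(G) = ⋃ {G' ⊆ G | ∀ g ∈ G', ∃ t ∈ G', (g,t) ∈ τ_c}`. -/
def safe0 (G : Set S) : Set S :=
  ⋃₀ {G' : Set S | G' ⊆ G ∧ ∀ g ∈ G', ∃ t ∈ G', T.tc g t}

/-- Controlled limited attractor
`cla_L(G) = ⋂ {A | G ⊆ A ∧ ∀ s ∈ L, suc_c(s) ∩ A ≠ ∅ → s ∈ A}`. -/
def cla (L G : Set S) : Set S :=
  ⋂₀ {A : Set S | G ⊆ A ∧ ∀ s ∈ L, (T.sucC s ∩ A).Nonempty → s ∈ A}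

/-- Fragile states: `frag(B) = {s | ∃ b ∈ B, (s,b) ∈ τ_u}`. -/
def frag (B : Set S) : Set S := {s | ∃ b ∈ B, T.tu s b}

/-- The limited regions `L_0 = S \ F`, `L_{i+1} = L_0 \ frag(S \ A_i)` where `A_i = cla_{L_i}(G)`. -/
def Lseq (G : Set S) : ℕ → Set S
  | 0 => T.Fᶜ
  | i + 1 => T.Fᶜ \ T.frag (T.cla (Lseq G i) G)ᶜ

/-- The attractors `A_i = cla_{L_i}(G)`. -/
def Aseq (G : Set S) (i : ℕ) : Set S := T.cla (T.Lseq G i) G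

/-- `safe_k(G)`: for `k = 0` it is `safe_0(G)`; for `k ≥ 1` it is `safe_0(G ∩ L_k)`. -/
def safeK : ℕ → Set S → Set S
  | 0, G => T.safe0 G
  | k + 1, G => T.safe0 (G ∩ T.Lseq G (k + 1))

/-- `res_k(S \ F)`: the limit (greatest fixed point) of the decreasing iteration
`G_0 = S \ F`, `G_{i+1} = safe_k(G_i)`; the iteration stabilizes after at most
`|S \ F|` steps. -/
noncomputable def resK (k : ℕ) : Set S := (T.safeK k)^[(T.Fᶜ : Set S).ncard] T.Fᶜ

end TSF

lemma TSF.cla_mono_L {S : Type*} (T : TSF S) {L L' G : Set S} (h : L ⊆ L') :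
    T.cla L G ⊆ T.cla L' G := by
  apply Set.sInter_subset_sInter
  rintro A ⟨hGA, hA⟩
  exact ⟨hGA, fun s hs hne => hA s (h hs) hne⟩

lemma TSF.frag_mono {S : Type*} (T : TSF S) {B B' : Set S} (h : B ⊆ B') :
    T.frag B ⊆ T.frag B' := by
  rintro s ⟨b, hb, ht⟩; exact ⟨b, h hb, ht⟩

lemma TSF.Lseq_antitone {S : Type*} (T : TSF S) (G : Set S) (i : ℕ) :
    T.Lseq G (i + 1) ⊆ T.Lseq G i := by
  induction i with
  | zero => intro s hs; exact hs.1
  | succ i ih =>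
    intro s hs
    refine ⟨hs.1, fun hf => hs.2 ?_⟩
    exact T.frag_mono (Set.compl_subset_compl.2 (T.cla_mono_L ih)) hf

/-- In the construction of `safe_k` (for `k ≥ 1`), the attractors `A_0, …, A_{k-1}` and
the limited regions `L_0, …, L_k` form descending chains. -/
theorem stmt_9 {S : Type*} [Fintype S] (T : TSF S) (G : Set S) (hG : G ⊆ T.Fᶜ)
    (k : ℕ) (hk : 1 ≤ k) :
    (∀ i : ℕ, i + 1 < k → T.Aseq G (i + 1) ⊆ T.Aseq G i) ∧
    (∀ i : ℕ, i + 1 ≤ k → T.Lseq G (i + 1) ⊆ T.Lseq G i) := by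
  refine ⟨fun i _ => T.cla_mono_L (T.Lseq_antitone G i), fun i _ => T.Lseq_antitone G i⟩
end

section
/- Let T = (S, ι, τ_c, τ_u, F) be a transition system with failures, G ⊆ S \ F, and k ≥ 0. Then safe_k(G) ⊆ G, and every state in safe_k(G) has a controlled successor in safe_k(G); hence there is a memoryless control strategy keeping any play that starts in safe_k(G) and uses only these controlled moves inside safe_k(G) forever. -/

lemma TSF.safe0_subset {S : Type*} (T : TSF S) (H : Set S) : T.safe0 H ⊆ H := by
  rintro s ⟨G', ⟨hsub, _⟩, hs⟩; exact hsub hs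

lemma TSF.safe0_succ {S : Type*} (T : TSF S) (H : Set S) :
    ∀ s ∈ T.safe0 H, ∃ t ∈ T.safe0 H, T.tc s t := by
  rintro s ⟨G', ⟨hsub, hstep⟩, hs⟩
  obtain ⟨t, ht, htc⟩ := hstep s hs
  exact ⟨t, ⟨G', ⟨hsub, hstep⟩, ht⟩, htc⟩

/-- `safe_k(G) ⊆ G`, every state of `safe_k(G)` has a controlled successor in `safe_k(G)`,
and hence there is a memoryless control strategy keeping any play starting in `safe_k(G)`
and following the strategy inside `safe_k(G)` forever. -/
theorem stmt_10 {S : Type*} [Fintype S] (T : TSF S) (G : Set S) (hG : G ⊆ T.Fᶜ) (k : ℕ) :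
    T.safeK k G ⊆ G ∧
    (∀ s ∈ T.safeK k G, ∃ t ∈ T.safeK k G, T.tc s t) ∧
    ∃ σ : S → S,
      (∀ s ∈ T.safeK k G, T.tc s (σ s) ∧ σ s ∈ T.safeK k G) ∧
      ∀ seq : ℕ → S, seq 0 ∈ T.safeK k G → (∀ i : ℕ, seq (i + 1) = σ (seq i)) →
        ∀ i : ℕ, seq i ∈ T.safeK k G := by
  classical
  have hsub : T.safeK k G ⊆ G := by
    cases k with
    | zero => exact T.safe0_subset G
    | succ k => exact (T.safe0_subset _).trans Set.inter_subset_left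
  have hsucc : ∀ s ∈ T.safeK k G, ∃ t ∈ T.safeK k G, T.tc s t := by
    cases k with
    | zero => exact T.safe0_succ G
    | succ k => exact T.safe0_succ _
  refine ⟨hsub, hsucc, fun s => if h : s ∈ T.safeK k G then (hsucc s h).choose else s, ?_, ?_⟩
  · intro s hs
    simp only [dif_pos hs]
    obtain ⟨ht, htc⟩ := (hsucc s hs).choose_spec
    exact ⟨htc, ht⟩
  · intro seq h0 hstep i
    induction i with
    | zero => exact h0
    | succ i ih =>
      rw [hstep i]
      simp only [dif_pos ih]
      exact (hsucc _ ih).choose_spec.1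
end

section
/- Let T = (S, ι, τ_c, τ_u, F) be a transition system with failures. Resilience is downward closed in k: for all 0 ≤ j ≤ k, res_k(S \ F) ⊆ res_j(S \ F); in particular, if a state is k-resilient then it is j-resilient for every j ≤ k, so the set of resilience parameters that a given state satisfies is an initial segment of ℕ (which justifies defining the resilience level k_max of a state as the maximal k for which it is k-resilient, and computing it by monotone search). -/
namespace TSF
variable {S : Type*} (T : TSF S)

lemma safe0_mono {G G' : Set S} (h : G ⊆ G') : T.safe0 G ⊆ T.safe0 G' := by
  apply Set.sUnion_subset_sUnion
  rintro A ⟨hA, hc⟩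
  exact ⟨hA.trans h, hc⟩

lemma cla_mono {L L' G G' : Set S} (hL : L ⊆ L') (hG : G ⊆ G') :
    T.cla L G ⊆ T.cla L' G' := by
  apply Set.sInter_subset_sInter
  rintro A ⟨hGA, hc⟩
  exact ⟨hG.trans hGA, fun s hs hne => hc s (hL hs) hne⟩

lemma frag_mono_s15 {B B' : Set S} (h : B ⊆ B') : T.frag B ⊆ T.frag B' := by
  rintro s ⟨b, hb, hub⟩
  exact ⟨b, h hb, hub⟩

lemma Lseq_mono_G {G G' : Set S} (h : G ⊆ G') (i : ℕ) :
    T.Lseq G i ⊆ T.Lseq G' i := by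
  induction i with
  | zero => exact le_rfl
  | succ i ih =>
    apply Set.diff_subset_diff_right
    exact T.frag_mono_s15 (Set.compl_subset_compl.2 (T.cla_mono ih h))

lemma Lseq_anti_succ (G : Set S) (i : ℕ) : T.Lseq G (i + 1) ⊆ T.Lseq G i := by
  induction i with
  | zero => exact Set.diff_subset
  | succ i ih =>
    apply Set.diff_subset_diff_right
    exact T.frag_mono_s15 (Set.compl_subset_compl.2 (T.cla_mono ih le_rfl))

lemma Lseq_anti {G : Set S} {j k : ℕ} (h : j ≤ k) : T.Lseq G k ⊆ T.Lseq G j := by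
  induction k with
  | zero => simp [Nat.le_zero.mp h]
  | succ k ih =>
    rcases Nat.eq_or_lt_of_le h with rfl | h'
    · exact le_rfl
    · exact (T.Lseq_anti_succ G k).trans (ih (Nat.lt_succ_iff.mp h'))

lemma safeK_anti {j k : ℕ} (h : j ≤ k) (G : Set S) : T.safeK k G ⊆ T.safeK j G := by
  cases j with
  | zero =>
    cases k with
    | zero => exact le_rfl
    | succ k => exact T.safe0_mono Set.inter_subset_left
  | succ j =>
    cases k with
    | zero => omega
    | succ k =>
      exact T.safe0_mono (Set.inter_subset_inter le_rfl (T.Lseq_anti h))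

lemma safeK_mono {G G' : Set S} (h : G ⊆ G') (k : ℕ) : T.safeK k G ⊆ T.safeK k G' := by
  cases k with
  | zero => exact T.safe0_mono h
  | succ k =>
    exact T.safe0_mono (Set.inter_subset_inter h (T.Lseq_mono_G h _))

lemma iterate_subset {j k : ℕ} (h : j ≤ k) (n : ℕ) :
    (T.safeK k)^[n] T.Fᶜ ⊆ (T.safeK j)^[n] T.Fᶜ := by
  induction n with
  | zero => exact le_rfl
  | succ n ih =>
    rw [Function.iterate_succ_apply', Function.iterate_succ_apply']
    exact (T.safeK_anti h _).trans (T.safeK_mono ih j)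

end TSF

/-- Resilience is downward closed in `k`: for `j ≤ k`, `res_k(S \ F) ⊆ res_j(S \ F)`;
in particular every `k`-resilient state is `j`-resilient for every `j ≤ k`. -/
theorem stmt_15 {S : Type*} [Fintype S] (T : TSF S) (j k : ℕ) (hjk : j ≤ k) :
    T.resK k ⊆ T.resK j ∧ ∀ s : S, s ∈ T.resK k → s ∈ T.resK j := by
  have := T.iterate_subset hjk (T.Fᶜ : Set S).ncard
  exact ⟨this, fun s hs => this hs⟩
end

section
/- Let T = (S, ι, τ_c, τ_u, F) be a transition system with failures, G ⊆ S \ F, k ≥ 1, and let A_0, ..., A_{k-1} and L_0, ..., L_k be as in the construction of safe_k. Then: (a) for every 1 ≤ i ≤ k-1, A_i \ G ⊆ L_i, and consequently every uncontrolled successor of a state in A_i \ G lies in A_{i-1}; and (b) safe_k(G) ⊆ L_k, and consequently every uncontrolled successor of a state in safe_k(G) lies in A_{k-1}. -/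
lemma my_cla_diff_subset {S : Type*} (T : TSF S) (L G : Set S) :
    T.cla L G \ G ⊆ L := by
  intro s hs
  have h : T.cla L G ⊆ G ∪ (T.cla L G ∩ L) := by
    apply Set.sInter_subset_of_mem
    refine ⟨Set.subset_union_left, ?_⟩
    rintro s hsL ⟨t, htc, htA⟩
    have htcla : t ∈ T.cla L G := by
      rcases htA with h | h
      · exact fun A hA => hA.1 h
      · exact h.1
    right
    refine ⟨?_, hsL⟩
    intro A hA
    exact hA.2 s hsL ⟨t, htc, htcla A hA⟩
  rcases h hs.1 with h | h
  · exact absurd h hs.2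
  · exact h.2

lemma my_safe0_subset {S : Type*} (T : TSF S) (G : Set S) : T.safe0 G ⊆ G := by
  rintro s ⟨G', hG', hs⟩
  exact hG'.1 hs

lemma my_Lseq_succ_tu {S : Type*} (T : TSF S) (G : Set S) (j : ℕ) {s : S}
    (hs : s ∈ T.Lseq G (j + 1)) {t : S} (ht : T.tu s t) : t ∈ T.Aseq G j := by
  by_contra hnot
  exact hs.2 ⟨t, hnot, ht⟩

/-- (a) For `1 ≤ i ≤ k-1`: `A_i \ G ⊆ L_i`, and every uncontrolled successor of a state in
`A_i \ G` lies in `A_{i-1}`. (b) `safe_k(G) ⊆ L_k`, and every uncontrolled successor of a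
state in `safe_k(G)` lies in `A_{k-1}`. -/
theorem stmt_17 {S : Type*} [Fintype S] (T : TSF S) (G : Set S) (hG : G ⊆ T.Fᶜ)
    (k : ℕ) (hk : 1 ≤ k) :
    (∀ i : ℕ, 1 ≤ i → i ≤ k - 1 →
      T.Aseq G i \ G ⊆ T.Lseq G i ∧
      ∀ s ∈ T.Aseq G i \ G, ∀ t : S, T.tu s t → t ∈ T.Aseq G (i - 1)) ∧
    (T.safeK k G ⊆ T.Lseq G k ∧
      ∀ s ∈ T.safeK k G, ∀ t : S, T.tu s t → t ∈ T.Aseq G (k - 1)) := by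
  constructor
  · intro i hi1 hik
    obtain ⟨j, rfl⟩ : ∃ j, i = j + 1 := ⟨i - 1, (Nat.succ_pred_eq_of_pos hi1).symm⟩
    have hsub : T.Aseq G (j + 1) \ G ⊆ T.Lseq G (j + 1) := my_cla_diff_subset T _ G
    refine ⟨hsub, fun s hs t ht => ?_⟩
    simpa using my_Lseq_succ_tu T G j (hsub hs) ht
  · obtain ⟨j, rfl⟩ : ∃ j, k = j + 1 := ⟨k - 1, (Nat.succ_pred_eq_of_pos hk).symm⟩
    have hsub : T.safeK (j + 1) G ⊆ T.Lseq G (j + 1) := fun s hs =>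
      (my_safe0_subset T _ hs).2
    refine ⟨hsub, fun s hs t ht => ?_⟩
    simpa using my_Lseq_succ_tu T G j (hsub hs) ht
end
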